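/- Let Ω ⊆ ℂ be open, let a, b, U be smooth real-valued functions on Ω, let h be a smooth positive real-valued function on Ω, and let L ψ = -h²[(∂ₓ - ia)²ψ + (∂_y - ib)²ψ] + Uψ. Then there exist smooth functions β₁, β₀, β₁*, β₀* : Ω → ℂ such that Lψ = (β₁∂̄ + β₀)((β₁*∂ + β₀*)ψ) for every smooth ψ : Ω → ℂ if and only if U = B, where B = h²(∂ₓb - ∂_y a). -/

import Mathlib

open Complex ComplexConjugate MeasureTheory

noncomputable section

/-- Partial derivative in the x-direction (identifying ℂ with ℝ²). -/
def pdx (f : ℂ → ℂ) (z : ℂ) : ℂ := fderiv ℝ f z 1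

/-- Partial derivative in the y-direction. -/
def pdy (f : ℂ → ℂ) (z : ℂ) : ℂ := fderiv ℝ f z Complex.I

/-- Wirtinger derivative ∂ = (∂ₓ - i ∂_y)/2. -/
def wd (f : ℂ → ℂ) (z : ℂ) : ℂ := (pdx f z - Complex.I * pdy f z) / 2

/-- Wirtinger derivative ∂̄ = (∂ₓ + i ∂_y)/2. -/
def wdb (f : ℂ → ℂ) (z : ℂ) : ℂ := (pdx f z + Complex.I * pdy f z) / 2

/-- x-derivative of a real-valued function. -/
def pdxR (f : ℂ → ℝ) (z : ℂ) : ℝ := fderiv ℝ f z 1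

/-- y-derivative of a real-valued function. -/
def pdyR (f : ℂ → ℝ) (z : ℂ) : ℝ := fderiv ℝ f z Complex.I

/-- Magnetic field B = h²(∂ₓ b - ∂_y a). -/
def Bf (a b h : ℂ → ℝ) (z : ℂ) : ℝ := (h z)^2 * (pdxR b z - pdyR a z)

/-- Covariant derivative ∇ψ = ∂ψ - iAψ with A = (a - ib)/2. -/
def cd (a b : ℂ → ℝ) (ψ : ℂ → ℂ) (z : ℂ) : ℂ :=
  wd ψ z - Complex.I * (((a z : ℂ) - Complex.I * (b z : ℂ)) / 2) * ψ z

/-- Covariant derivative ∇̄ψ = ∂̄ψ - iĀψ with Ā = (a + ib)/2. -/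
def cdb (a b : ℂ → ℝ) (ψ : ℂ → ℂ) (z : ℂ) : ℂ :=
  wdb ψ z - Complex.I * (((a z : ℂ) + Complex.I * (b z : ℂ)) / 2) * ψ z

/-- Magnetic covariant x-derivative ∇ₓψ = ∂ₓψ - iaψ. -/
def cdx (a : ℂ → ℝ) (ψ : ℂ → ℂ) (z : ℂ) : ℂ := pdx ψ z - Complex.I * (a z : ℂ) * ψ z

/-- Magnetic covariant y-derivative ∇_yψ = ∂_yψ - ibψ. -/
def cdy (b : ℂ → ℝ) (ψ : ℂ → ℂ) (z : ℂ) : ℂ := pdy ψ z - Complex.I * (b z : ℂ) * ψ z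

/-- The Schrödinger operator L ψ = -h²[(∂ₓ - ia)²ψ + (∂_y - ib)²ψ] + Uψ. -/
def LSch (a b h U : ℂ → ℝ) (ψ : ℂ → ℂ) (z : ℂ) : ℂ :=
  -(h z : ℂ)^2 * (cdx a (cdx a ψ) z + cdy b (cdy b ψ) z) + (U z : ℂ) * ψ z

/-! Expanding in Wirtinger derivatives puts both sides in the normal form
`c₂ ∂̄∂ + c₁ ∂ + c₁' ∂̄ + c₀`, whose coefficients at a point are recovered by testing on
`1, z, z̄, z z̄`. For `L` they are `-4h²`, `2ih²(a + ib)`, `4ih²A` and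
`h²(4i ∂̄A + 2(a + ib)A) + (U - B)`, where `A = (a - ib)/2`. Matching the first and third
coefficients forces `β₀* = -iAβ₁*` on `Ω`; applying `∂̄` to this identity and substituting the
second coefficient into the fourth leaves `U - B = 0`. Conversely, if `U = B` then
`β₁ = -4h²`, `β₀ = 2ih²(a + ib)`, `β₁* = 1`, `β₀* = -iA` is a factorisation. -/

open scoped ContDiff

@[fun_prop]
lemma Complex.contDiff_ofReal {n : WithTop ℕ∞} : ContDiff ℝ n ((↑) : ℝ → ℂ) :=
  ofRealCLM.contDiff

lemma fderiv_ofReal_comp_apply {E : Type*} [NormedAddCommGroup E] [NormedSpace ℝ E]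
    {r : E → ℝ} {x : E} (hr : DifferentiableAt ℝ r x) (v : E) :
    fderiv ℝ (fun w => (r w : ℂ)) x v = fderiv ℝ r x v := by
  rw [show (fun w => (r w : ℂ)) = ofRealCLM ∘ r from rfl,
    fderiv_comp x ofRealCLM.differentiableAt hr]
  simp

section Wirtinger

variable {f g ψ : ℂ → ℂ} {z : ℂ}

lemma wd_mul (hf : DifferentiableAt ℝ f z) (hg : DifferentiableAt ℝ g z) :
    wd (fun w => f w * g w) z = f z * wd g z + g z * wd f z := by
  simp [wd, pdx, pdy, fderiv_fun_mul hf hg]; ring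

lemma wdb_mul (hf : DifferentiableAt ℝ f z) (hg : DifferentiableAt ℝ g z) :
    wdb (fun w => f w * g w) z = f z * wdb g z + g z * wdb f z := by
  simp [wdb, pdx, pdy, fderiv_fun_mul hf hg]; ring

lemma wdb_add (hf : DifferentiableAt ℝ f z) (hg : DifferentiableAt ℝ g z) :
    wdb (fun w => f w + g w) z = wdb f z + wdb g z := by
  simp [wdb, pdx, pdy, fderiv_fun_add hf hg]; ring

lemma wdb_const_mul (c : ℂ) (hf : DifferentiableAt ℝ f z) :
    wdb (fun w => c * f w) z = c * wdb f z := by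
  simp [wdb, pdx, pdy, fderiv_const_mul hf]; ring

lemma wd_const (c : ℂ) : wd (fun _ => c) = fun _ => 0 := by
  ext; simp [wd, pdx, pdy]

lemma wdb_const (c : ℂ) : wdb (fun _ => c) = fun _ => 0 := by
  ext; simp [wdb, pdx, pdy]

lemma wd_id : wd (fun w => w) = fun _ => 1 := by
  ext; simp [wd, pdx, pdy]

lemma wdb_id : wdb (fun w => w) = fun _ => 0 := by
  ext; simp [wdb, pdx, pdy]

lemma wd_conj : wd (fun w => conj w) = fun _ => 0 := by
  ext; rw [wd, pdx, pdy, show (fun w => conj w) = conjCLE from rfl, conjCLE.fderiv]; simp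

lemma wdb_conj : wdb (fun w => conj w) = fun _ => 1 := by
  ext; rw [wdb, pdx, pdy, show (fun w => conj w) = conjCLE from rfl, conjCLE.fderiv]; simp

lemma Filter.EventuallyEq.wdb_eq (hfg : f =ᶠ[nhds z] g) : wdb f z = wdb g z := by
  simp only [wdb, pdx, pdy, hfg.fderiv_eq]

lemma ContDiffAt.differentiableAt_fderiv_apply (hψ : ContDiffAt ℝ 2 ψ z) (v : ℂ) :
    DifferentiableAt ℝ (fun w => fderiv ℝ ψ w v) z :=
  ((hψ.fderiv_right (m := 1) (by norm_num)).differentiableAt one_ne_zero).clm_apply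
    (differentiableAt_const v)

lemma ContDiffAt.differentiableAt_wd (hψ : ContDiffAt ℝ 2 ψ z) :
    DifferentiableAt ℝ (wd ψ) z := by
  unfold wd pdx pdy
  have := hψ.differentiableAt_fderiv_apply
  fun_prop

lemma ContDiffAt.fderiv_fderiv_apply_comm (hψ : ContDiffAt ℝ 2 ψ z) (u v : ℂ) :
    fderiv ℝ (fun w => fderiv ℝ ψ w v) z u = fderiv ℝ (fun w => fderiv ℝ ψ w u) z v := by
  have hd : DifferentiableAt ℝ (fderiv ℝ ψ) z :=
    (hψ.fderiv_right (m := 1) (by norm_num)).differentiableAt one_ne_zero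
  simp only [fderiv_clm_apply hd (differentiableAt_const _), fderiv_const_apply]
  simpa using (hψ.isSymmSndFDerivAt (by simp)) u v

lemma wdb_wd_eq (hψ : ContDiffAt ℝ 2 ψ z) :
    wdb (wd ψ) z = (pdx (pdx ψ) z + pdy (pdy ψ) z) / 4 := by
  have hX := hψ.differentiableAt_fderiv_apply 1
  have hY := hψ.differentiableAt_fderiv_apply I
  have hwd : wd ψ = fun w => 2⁻¹ * (fderiv ℝ ψ w 1 - I * fderiv ℝ ψ w I) := by
    ext; rw [wd, pdx, pdy]; ring
  rw [hwd, wdb, pdx, pdy, fderiv_const_mul (hX.fun_sub (hY.const_mul I)),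
    fderiv_fun_sub hX (hY.const_mul I), fderiv_const_mul hY]
  show _ = (fderiv ℝ (fun w => fderiv ℝ ψ w 1) z 1 + fderiv ℝ (fun w => fderiv ℝ ψ w I) z I) / 4
  simp only [smul_apply, sub_apply, smul_eq_mul, hψ.fderiv_fderiv_apply_comm I 1]
  linear_combination (-(fderiv ℝ (fun w => fderiv ℝ ψ w I) z I) / 4) * I_mul_I

end Wirtinger

def wirtingerOp (c₂ c₁ c₁' c₀ : ℂ) (ψ : ℂ → ℂ) (z : ℂ) : ℂ :=
  c₂ * wdb (wd ψ) z + c₁ * wd ψ z + c₁' * wdb ψ z + c₀ * ψ z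

lemma eq_of_wirtingerOp_eq {c₂ c₁ c₁' c₀ d₂ d₁ d₁' d₀ : ℂ} (z : ℂ)
    (h : ∀ ψ : ℂ → ℂ, ContDiff ℝ ∞ ψ →
      wirtingerOp c₂ c₁ c₁' c₀ ψ z = wirtingerOp d₂ d₁ d₁' d₀ ψ z) :
    c₂ = d₂ ∧ c₁ = d₁ ∧ c₁' = d₁' ∧ c₀ = d₀ := by
  have hconj : ContDiff ℝ ∞ (fun w : ℂ => conj w) := conjCLE.contDiff
  have hconj' : Differentiable ℝ (fun w : ℂ => conj w) := hconj.differentiable (by simp)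
  have hwd_sq : wd (fun w => w * conj w) = fun w => conj w := by
    ext w
    rw [wd_mul differentiableAt_fun_id (hconj' w), wd_conj, wd_id]
    ring
  have h₀ := h (fun _ => 1) contDiff_const
  have h₁ := h (fun w => w) contDiff_id
  have h₁' := h (fun w => conj w) hconj
  have h₂ := h (fun w => w * conj w) (contDiff_id.mul hconj)
  simp only [wirtingerOp, wd_const, wdb_const, wd_id, wdb_id, wd_conj, wdb_conj, hwd_sq,
    mul_zero, add_zero, mul_one, zero_add] at h₀ h₁ h₁' h₂
  rw [wdb_mul differentiableAt_fun_id (hconj' z), wdb_id, wdb_conj] at h₂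
  have e₁ : c₁ = d₁ := by linear_combination h₁ - z * h₀
  have e₁' : c₁' = d₁' := by linear_combination h₁' - conj z * h₀
  exact ⟨by linear_combination h₂ - conj z * e₁ - z * e₁' - z * conj z * h₀, e₁, e₁', h₀⟩

lemma beta_comp_eq_wirtingerOp {β₁ β₀ β₁s β₀s ψ : ℂ → ℂ} {z : ℂ}
    (hβ₁s : DifferentiableAt ℝ β₁s z) (hβ₀s : DifferentiableAt ℝ β₀s z)
    (hψ : ContDiffAt ℝ 2 ψ z) :
    β₁ z * wdb (fun w => β₁s w * wd ψ w + β₀s w * ψ w) z + β₀ z * (β₁s z * wd ψ z + β₀s z * ψ z)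
      = wirtingerOp (β₁ z * β₁s z) (β₁ z * wdb β₁s z + β₀ z * β₁s z) (β₁ z * β₀s z)
          (β₁ z * wdb β₀s z + β₀ z * β₀s z) ψ z := by
  have hwd := hψ.differentiableAt_wd
  have hψ' := hψ.differentiableAt two_ne_zero
  rw [wdb_add (hβ₁s.fun_mul hwd) (hβ₀s.fun_mul hψ'), wdb_mul hβ₁s hwd, wdb_mul hβ₀s hψ',
    wirtingerOp]
  ring

/-- `cdx a = covDeriv 1 a` and `cdy b = covDeriv I b`. -/
def covDeriv (v : ℂ) (r : ℂ → ℝ) (ψ : ℂ → ℂ) (z : ℂ) : ℂ := fderiv ℝ ψ z v - I * r z * ψ z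

lemma covDeriv_covDeriv {v z : ℂ} {r : ℂ → ℝ} {ψ : ℂ → ℂ} (hr : DifferentiableAt ℝ r z)
    (hψ : ContDiffAt ℝ 2 ψ z) :
    covDeriv v r (covDeriv v r ψ) z = fderiv ℝ (fun w => fderiv ℝ ψ w v) z v
      - 2 * I * r z * fderiv ℝ ψ z v - I * (fderiv ℝ r z v : ℝ) * ψ z
      - (r z : ℂ) ^ 2 * ψ z := by
  have hψ' : DifferentiableAt ℝ ψ z := hψ.differentiableAt two_ne_zero
  have hr' : DifferentiableAt ℝ (fun w => (r w : ℂ)) z := (differentiable_ofReal _).comp z hr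
  have hrψ : DifferentiableAt ℝ (fun w => I * r w * ψ w) z := (hr'.const_mul I).mul hψ'
  rw [covDeriv, show covDeriv v r ψ = fun w => fderiv ℝ ψ w v - I * r w * ψ w from rfl,
    fderiv_fun_sub (hψ.differentiableAt_fderiv_apply v) hrψ,
    fderiv_fun_mul (hr'.const_mul I) hψ', fderiv_const_mul hr']
  simp only [sub_apply, add_apply, smul_apply, smul_eq_mul, fderiv_ofReal_comp_apply hr]
  linear_combination ((r z : ℂ) ^ 2 * ψ z) * I_mul_I

def complexPotential (a b : ℂ → ℝ) (z : ℂ) : ℂ := ((a z : ℂ) - I * (b z : ℂ)) / 2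

section Potential

variable {a b : ℂ → ℝ} {z : ℂ}

lemma differentiableAt_complexPotential (ha : DifferentiableAt ℝ a z)
    (hb : DifferentiableAt ℝ b z) : DifferentiableAt ℝ (complexPotential a b) z := by
  unfold complexPotential; fun_prop

lemma wdb_complexPotential (ha : DifferentiableAt ℝ a z) (hb : DifferentiableAt ℝ b z) :
    wdb (complexPotential a b) z = (pdxR a z + pdyR b z + I * (pdyR a z - pdxR b z)) / 4 := by
  have ha' : DifferentiableAt ℝ (fun w => (a w : ℂ)) z := (differentiable_ofReal _).comp z ha
  have hb' : DifferentiableAt ℝ (fun w => (b w : ℂ)) z := (differentiable_ofReal _).comp z hb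
  have hA : complexPotential a b = fun w => 2⁻¹ * ((a w : ℂ) - I * (b w : ℂ)) := by
    ext; rw [complexPotential]; ring
  rw [hA, wdb, pdx, pdy, fderiv_const_mul (ha'.fun_sub (hb'.const_mul I)),
    fderiv_fun_sub ha' (hb'.const_mul I), fderiv_const_mul hb']
  simp only [sub_apply, smul_apply, smul_eq_mul, fderiv_ofReal_comp_apply ha,
    fderiv_ofReal_comp_apply hb, pdxR, pdyR]
  linear_combination (-(fderiv ℝ b z I : ℂ) / 4) * I_mul_I

end Potential

lemma LSch_eq_wirtingerOp {a b h U : ℂ → ℝ} {ψ : ℂ → ℂ} {z : ℂ} (ha : DifferentiableAt ℝ a z)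
    (hb : DifferentiableAt ℝ b z) (hψ : ContDiffAt ℝ 2 ψ z) :
    LSch a b h U ψ z = wirtingerOp (-4 * (h z : ℂ) ^ 2)
      (2 * I * (h z : ℂ) ^ 2 * (a z + I * b z))
      (4 * I * (h z : ℂ) ^ 2 * complexPotential a b z)
      ((h z : ℂ) ^ 2 * (4 * I * wdb (complexPotential a b) z
        + 2 * (a z + I * b z) * complexPotential a b z) + (U z - Bf a b h z)) ψ z := by
  rw [LSch, wirtingerOp, show cdx a = covDeriv 1 a from rfl, show cdy b = covDeriv I b from rfl,
    covDeriv_covDeriv ha hψ, covDeriv_covDeriv hb hψ, wdb_wd_eq hψ, wdb_complexPotential ha hb,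
    complexPotential, Bf, wd, wdb,
    show pdx (pdx ψ) z = fderiv ℝ (fun w => fderiv ℝ ψ w 1) z 1 from rfl,
    show pdy (pdy ψ) z = fderiv ℝ (fun w => fderiv ℝ ψ w I) z I from rfl]
  simp only [pdx, pdy, pdxR, pdyR]
  push_cast
  linear_combination (h z : ℂ) ^ 2 * (ψ z * (b z ^ 2 - fderiv ℝ a z I + fderiv ℝ b z 1)
    + 2 * I * b z * fderiv ℝ ψ z I) * I_mul_I

lemma eq_Bf_of_beta_factorisation {Ω : Set ℂ} (hΩ : IsOpen Ω) {a b h U : ℂ → ℝ}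
    (ha : DifferentiableOn ℝ a Ω) (hb : DifferentiableOn ℝ b Ω) (hh : ∀ z ∈ Ω, h z ≠ 0)
    {β₁ β₀ β₁s β₀s : ℂ → ℂ} (hβ₁s : DifferentiableOn ℝ β₁s Ω) (hβ₀s : DifferentiableOn ℝ β₀s Ω)
    (hfac : ∀ ψ : ℂ → ℂ, ContDiff ℝ ∞ ψ → ∀ z ∈ Ω,
      LSch a b h U ψ z = β₁ z * wdb (fun w => β₁s w * wd ψ w + β₀s w * ψ w) z +
        β₀ z * (β₁s z * wd ψ z + β₀s z * ψ z)) :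
    ∀ z ∈ Ω, U z = Bf a b h z := by
  set A := complexPotential a b
  have coeffs : ∀ z ∈ Ω, β₁ z * β₁s z = -4 * (h z : ℂ) ^ 2 ∧
      β₁ z * wdb β₁s z + β₀ z * β₁s z = 2 * I * (h z : ℂ) ^ 2 * (a z + I * b z) ∧
      β₁ z * β₀s z = 4 * I * (h z : ℂ) ^ 2 * A z ∧
      β₁ z * wdb β₀s z + β₀ z * β₀s z = (h z : ℂ) ^ 2 * (4 * I * wdb A z
        + 2 * (a z + I * b z) * A z) + (U z - Bf a b h z) := by
    intro z hz
    have hz' := hΩ.mem_nhds hz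
    refine eq_of_wirtingerOp_eq z fun ψ hψ => ?_
    have hψ₂ : ContDiffAt ℝ 2 ψ z := hψ.contDiffAt.of_le ENat.LEInfty.out
    rw [← beta_comp_eq_wirtingerOp (hβ₁s.differentiableAt hz') (hβ₀s.differentiableAt hz') hψ₂,
      ← LSch_eq_wirtingerOp (ha.differentiableAt hz') (hb.differentiableAt hz') hψ₂,
      hfac ψ hψ z hz]
  have hpot : ∀ z ∈ Ω, β₀s z = -I * (A z * β₁s z) := by
    intro z hz
    obtain ⟨e₂, -, e₁, -⟩ := coeffs z hz
    have hβ₁ : β₁ z ≠ 0 := left_ne_zero_of_mul (b := β₁s z) (by rw [e₂]; simp [hh z hz])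
    exact mul_left_cancel₀ hβ₁ (by linear_combination e₁ + I * A z * e₂)
  intro z hz
  have hz' := hΩ.mem_nhds hz
  have hA : DifferentiableAt ℝ A z :=
    differentiableAt_complexPotential (ha.differentiableAt hz') (hb.differentiableAt hz')
  obtain ⟨e₂, e₁, -, e₀⟩ := coeffs z hz
  rw [(Filter.eventuallyEq_of_mem hz' hpot).wdb_eq, wdb_const_mul (f := fun w => A w * β₁s w) _
    (hA.mul (hβ₁s.differentiableAt hz')), wdb_mul hA (hβ₁s.differentiableAt hz'),
    hpot z hz] at e₀
  exact_mod_cast (by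
    linear_combination -e₀ - I * A z * e₁ - I * wdb A z * e₂
      - 2 * A z * (h z : ℂ) ^ 2 * (a z + I * b z) * I_mul_I : (U z : ℂ) = Bf a b h z)

lemma beta_factorisation_of_eq_Bf {Ω : Set ℂ} (hΩ : IsOpen Ω) {a b h U : ℂ → ℝ}
    (ha : ContDiffOn ℝ ∞ a Ω) (hb : ContDiffOn ℝ ∞ b Ω) (hh : ContDiffOn ℝ ∞ h Ω)
    (hUB : ∀ z ∈ Ω, U z = Bf a b h z) :
    ∃ β₁ β₀ β₁s β₀s : ℂ → ℂ,
        ContDiffOn ℝ ∞ β₁ Ω ∧ ContDiffOn ℝ ∞ β₀ Ω ∧ ContDiffOn ℝ ∞ β₁s Ω ∧ ContDiffOn ℝ ∞ β₀s Ω ∧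
        ∀ ψ : ℂ → ℂ, ContDiffOn ℝ ∞ ψ Ω → ∀ z ∈ Ω,
          LSch a b h U ψ z =
            β₁ z * wdb (fun w => β₁s w * wd ψ w + β₀s w * ψ w) z +
            β₀ z * (β₁s z * wd ψ z + β₀s z * ψ z) := by
  refine ⟨fun z => -4 * (h z : ℂ) ^ 2, fun z => 2 * I * (h z : ℂ) ^ 2 * (a z + I * b z),
    fun _ => 1, fun z => -I * complexPotential a b z, by fun_prop, by fun_prop, by fun_prop,
    by unfold complexPotential; fun_prop, fun ψ hψ z hz => ?_⟩
  have hz' := hΩ.mem_nhds hz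
  have ha' := (ha.differentiableOn (by simp)).differentiableAt hz'
  have hb' := (hb.differentiableOn (by simp)).differentiableAt hz'
  have hA := differentiableAt_complexPotential ha' hb'
  have hψ₂ : ContDiffAt ℝ 2 ψ z := (hψ.contDiffAt hz').of_le ENat.LEInfty.out
  beta_reduce
  rw [LSch_eq_wirtingerOp ha' hb' hψ₂, hUB z hz, beta_comp_eq_wirtingerOp
    (β₁ := fun z => -4 * (h z : ℂ) ^ 2) (β₀ := fun z => 2 * I * (h z : ℂ) ^ 2 * (a z + I * b z))
    (differentiableAt_const (1 : ℂ)) (hA.const_mul (-I)) hψ₂, wdb_const, wdb_const_mul _ hA]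
  simp only [wirtingerOp]
  linear_combination
    2 * (h z : ℂ) ^ 2 * (a z + I * b z) * complexPotential a b z * ψ z * I_mul_I

theorem beta_factorisation_iff_U_eq_B_general
    (Ω : Set ℂ) (hΩ : IsOpen Ω) (a b h U : ℂ → ℝ)
    (ha : ContDiffOn ℝ (⊤ : ℕ∞) a Ω) (hb : ContDiffOn ℝ (⊤ : ℕ∞) b Ω)
    (hh : ContDiffOn ℝ (⊤ : ℕ∞) h Ω)
    (hhpos : ∀ z ∈ Ω, 0 < h z) :
    (∃ β₁ β₀ β₁s β₀s : ℂ → ℂ,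
        ContDiffOn ℝ (⊤ : ℕ∞) β₁ Ω ∧ ContDiffOn ℝ (⊤ : ℕ∞) β₀ Ω ∧
        ContDiffOn ℝ (⊤ : ℕ∞) β₁s Ω ∧ ContDiffOn ℝ (⊤ : ℕ∞) β₀s Ω ∧
        ∀ ψ : ℂ → ℂ, ContDiffOn ℝ (⊤ : ℕ∞) ψ Ω → ∀ z ∈ Ω,
          LSch a b h U ψ z =
            β₁ z * wdb (fun w => β₁s w * wd ψ w + β₀s w * ψ w) z +
            β₀ z * (β₁s z * wd ψ z + β₀s z * ψ z)) ↔
      (∀ z ∈ Ω, U z = Bf a b h z) := by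
  refine ⟨fun ⟨_, _, _, _, _, _, hβ₁s, hβ₀s, hfac⟩ => ?_, beta_factorisation_of_eq_Bf hΩ ha hb hh⟩
  exact eq_Bf_of_beta_factorisation hΩ (ha.differentiableOn (by simp))
    (hb.differentiableOn (by simp)) (fun z hz => (hhpos z hz).ne')
    (hβ₁s.differentiableOn (by simp)) (hβ₀s.differentiableOn (by simp))
    (fun ψ hψ => hfac ψ hψ.contDiffOn)

/-- the β-factorisation L = (β₁∂̄ + β₀)(β₁*∂ + β₀*) exists
(with smooth coefficients) iff U = B. -/
theorem beta_factorisation_iff_U_eq_B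
    (Ω : Set ℂ) (hΩ : IsOpen Ω) (a b h U : ℂ → ℝ)
    (ha : ContDiffOn ℝ (⊤ : ℕ∞) a Ω) (hb : ContDiffOn ℝ (⊤ : ℕ∞) b Ω)
    (hh : ContDiffOn ℝ (⊤ : ℕ∞) h Ω) (hU : ContDiffOn ℝ (⊤ : ℕ∞) U Ω)
    (hhpos : ∀ z ∈ Ω, 0 < h z) :
    (∃ β₁ β₀ β₁s β₀s : ℂ → ℂ,
        ContDiffOn ℝ (⊤ : ℕ∞) β₁ Ω ∧ ContDiffOn ℝ (⊤ : ℕ∞) β₀ Ω ∧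
        ContDiffOn ℝ (⊤ : ℕ∞) β₁s Ω ∧ ContDiffOn ℝ (⊤ : ℕ∞) β₀s Ω ∧
        ∀ ψ : ℂ → ℂ, ContDiffOn ℝ (⊤ : ℕ∞) ψ Ω → ∀ z ∈ Ω,
          LSch a b h U ψ z =
            β₁ z * wdb (fun w => β₁s w * wd ψ w + β₀s w * ψ w) z +
            β₀ z * (β₁s z * wd ψ z + β₀s z * ψ z)) ↔
      (∀ z ∈ Ω, U z = Bf a b h z) :=
  beta_factorisation_iff_U_eq_B_general Ω hΩ a b h U ha hb hh hhpos
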